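/- If φ is a symmetric probability measure on a finitely generated group G with φ^{(n)}(e) ≥ exp(−n/π(n)) for an increasing function π: (0,∞) → (0,∞) with π(t) ≤ c·t, then there exists A > 0 such that for all n, Λ_φ(exp(A·n/π(n))) ≤ A/(2π(n)). -/

import Mathlib

/-!
Pass to the lazy walk `L = (δ + φ) / 2` and write `b m = L^{(m)}(e)`, so that
`b (2m) = ‖L^{(m)}‖₂²`. Expanding `L^{(2N)}` binomially and using that `φ^{(2m)}(e)` decreases in
`m` gives `φ^{(2N)}(e) ≤ 2 b (2N)`, so the return bound at `2N` and `π(2N) ≥ π(N)` yield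
`b (2N) ≥ exp(-2N/π(N)) / 2`.

Conversely, suppose `Λ_φ(V) > ε`. Truncating `g = L^{(m)}` at height `b (2m) / 4` produces a
function supported on at most `4 / b (2m)` points, with `‖·‖₂² ≥ b (2m) / 2` and
`E_L`-energy at most `E_L(g) = b (2m) - b (2m + 1)`; positivity of `L` gives
`b (2m + 2) ≤ b (2m + 1)`. Since `E_L = E_φ / 2`, as long as `b (2m) ≥ 4 / V` this yields
`b (2m + 2) ≤ (1 - ε/4) b (2m)`, hence `b (2N) ≤ max (4/V) (exp(-εN/4))`. For
`V = exp(A N/π(N))` and `ε = A/(2π(N))` the two bounds on `b (2N)` are incompatible once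
`A = 64c + 16`, because `N/π(N) ≥ 1/c`.
-/

open scoped BigOperators

/-- A symmetric probability measure on a group. -/
def IsSymProb {G : Type*} [Group G] (φ : G → ℝ) : Prop :=
  (∀ x, 0 ≤ φ x) ∧ (∑' x, φ x) = 1 ∧ ∀ x, φ x⁻¹ = φ x

/-- Convolution of two measures on a group. -/
noncomputable def convolve {G : Type*} [Group G] (μ ν : G → ℝ) : G → ℝ :=
  fun x => ∑' y : G, μ y * ν (y⁻¹ * x)

open Classical in
/-- Convolution powers `μ^{(n)}` (with `μ^{(0)} = δ_e`). -/
noncomputable def convPow {G : Type*} [Group G] (μ : G → ℝ) : ℕ → G → ℝ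
  | 0 => fun x => if x = 1 then 1 else 0
  | n + 1 => convolve μ (convPow μ n)

/-- The Dirichlet form `E_φ(f,f)`. -/
noncomputable def dirichletE {G : Type*} [Group G] (φ : G → ℝ) (f : G → ℝ) : ℝ :=
  (1 / 2) * ∑' x : G, ∑' y : G, (f (x * y) - f x) ^ 2 * φ y

/-- The L² spectral profile. -/
noncomputable def specProfile {G : Type*} [Group G] (φ : G → ℝ) (v : ℝ) : ℝ :=
  sInf {E : ℝ | ∃ f : G → ℝ, (Function.support f).Finite ∧
    ((Function.support f).ncard : ℝ) ≤ v ∧ (∑' x, (f x) ^ 2) = 1 ∧ E = dirichletE φ f}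

section Tsum

variable {α : Type*}

theorem summable_sq_of_nonneg {f : α → ℝ} (hf0 : 0 ≤ f) (hf : Summable f) :
    Summable fun x => f x ^ 2 :=
  Summable.of_nonneg_of_le (fun x => sq_nonneg (f x))
    (fun x => (sq (f x)).trans_le <|
      mul_le_mul_of_nonneg_right (hf.le_tsum x fun j _ => hf0 j) (hf0 x))
    (hf.mul_left (∑' x, f x))

theorem summable_mul_of_summable_sq {f g : α → ℝ} (hf : Summable fun x => f x ^ 2)
    (hg : Summable fun x => g x ^ 2) : Summable fun x => f x * g x :=
  .of_norm_bounded ((hf.add hg).div_const 2) fun x => by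
    rw [Real.norm_eq_abs, abs_mul]
    nlinarith [sq_nonneg (|f x| - |g x|), sq_abs (f x), sq_abs (g x)]

theorem sq_tsum_mul_le {f g : α → ℝ} (hf : Summable fun x => f x ^ 2)
    (hg : Summable fun x => g x ^ 2) :
    (∑' x, f x * g x) ^ 2 ≤ (∑' x, f x ^ 2) * ∑' x, g x ^ 2 := by
  refine le_of_tendsto' ((summable_mul_of_summable_sq hf hg).hasSum.pow 2) fun s => ?_
  exact (Finset.sum_mul_sq_le_sq_mul_sq s f g).trans <| mul_le_mul
    (hf.sum_le_tsum s fun _ _ => sq_nonneg _) (hg.sum_le_tsum s fun _ _ => sq_nonneg _)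
    (Finset.sum_nonneg fun _ _ => sq_nonneg _) (tsum_nonneg fun _ => sq_nonneg _)

theorem sq_tsum_mul_le_tsum_mul_tsum_mul_sq {w a : α → ℝ} (hw0 : 0 ≤ w) (hw : Summable w)
    (hwa : Summable fun x => w x * a x ^ 2) :
    (∑' x, w x * a x) ^ 2 ≤ (∑' x, w x) * ∑' x, w x * a x ^ 2 := by
  have hsq : ∀ x, √(w x) ^ 2 = w x := fun x => Real.sq_sqrt (hw0 x)
  have key := sq_tsum_mul_le (f := fun x => √(w x)) (g := fun x => √(w x) * a x)
    (by simpa only [hsq] using hw) (by simpa only [mul_pow, hsq] using hwa)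
  simpa only [← mul_assoc, Real.mul_self_sqrt (hw0 _), mul_pow, hsq] using key

end Tsum

section Convolution

variable {G : Type*} [Group G] {μ ν ρ : G → ℝ}

theorem convolve_nonneg (hμ0 : 0 ≤ μ) (hν0 : 0 ≤ ν) : 0 ≤ convolve μ ν :=
  fun _ => tsum_nonneg fun y => mul_nonneg (hμ0 y) (hν0 _)

theorem summable_convolve_kernel (hμ0 : 0 ≤ μ) (hμ : Summable μ) (hν0 : 0 ≤ ν)
    (hν : Summable ν) : Summable fun p : G × G => μ p.1 * ν (p.1⁻¹ * p.2) :=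
  (Equiv.prodShear (Equiv.refl G) fun y => Equiv.mulLeft y⁻¹).summable_iff.mpr
    (hμ.mul_of_nonneg hν hμ0 hν0)

theorem summable_convolve (hμ0 : 0 ≤ μ) (hμ : Summable μ) (hν0 : 0 ≤ ν)
    (hν : Summable ν) : Summable (convolve μ ν) :=
  (summable_convolve_kernel hμ0 hμ hν0 hν).prod_symm.prod

theorem summable_convolve_summand (hμ0 : 0 ≤ μ) (hμ : Summable μ) (hν0 : 0 ≤ ν)
    (hν : Summable ν) (x : G) : Summable fun y => μ y * ν (y⁻¹ * x) :=
  (summable_convolve_kernel hμ0 hμ hν0 hν).prod_symm.prod_factor x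

theorem tsum_convolve (hμ0 : 0 ≤ μ) (hμ : Summable μ) (hν0 : 0 ≤ ν) (hν : Summable ν) :
    ∑' x, convolve μ ν x = (∑' x, μ x) * ∑' x, ν x := by
  calc ∑' x, convolve μ ν x = ∑' y, ∑' x, μ y * ν (y⁻¹ * x) :=
        (summable_convolve_kernel hμ0 hμ hν0 hν).tsum_comm
    _ = ∑' y, μ y * ∑' x, ν x := by
        refine tsum_congr fun y => ?_
        rw [tsum_mul_left]
        exact congrArg (μ y * ·) ((Equiv.mulLeft y⁻¹).tsum_eq ν)
    _ = (∑' x, μ x) * ∑' x, ν x := tsum_mul_right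

theorem convolve_assoc (hμ0 : 0 ≤ μ) (hμ : Summable μ) (hν0 : 0 ≤ ν) (hν : Summable ν)
    (hρ0 : 0 ≤ ρ) (hρ : Summable ρ) :
    convolve (convolve μ ν) ρ = convolve μ (convolve ν ρ) := by
  funext x
  have hsum : Summable fun p : G × G => μ p.1 * ν (p.1⁻¹ * p.2) * ρ (p.2⁻¹ * x) :=
    .of_nonneg_of_le (fun p => mul_nonneg (mul_nonneg (hμ0 _) (hν0 _)) (hρ0 _))
      (fun p => mul_le_mul_of_nonneg_left (hρ.le_tsum _ fun j _ => hρ0 j)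
        (mul_nonneg (hμ0 _) (hν0 _)))
      ((summable_convolve_kernel hμ0 hμ hν0 hν).mul_right (∑' z, ρ z))
  calc convolve (convolve μ ν) ρ x = ∑' z, ∑' y, μ y * ν (y⁻¹ * z) * ρ (z⁻¹ * x) :=
        tsum_congr fun z => tsum_mul_right.symm
    _ = ∑' y, μ y * ∑' z, ν (y⁻¹ * z) * ρ (z⁻¹ * x) := by
        rw [hsum.tsum_comm]
        refine tsum_congr fun y => ?_
        rw [← tsum_mul_left]
        exact tsum_congr fun z => mul_assoc _ _ _
    _ = convolve μ (convolve ν ρ) x := by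
        refine tsum_congr fun y => congrArg (μ y * ·) ?_
        rw [← (Equiv.mulLeft y).tsum_eq]
        simp [convolve, mul_assoc]

theorem convolve_apply_inv (μ ν : G → ℝ) (x : G) :
    convolve μ ν x⁻¹ = convolve (fun y => ν y⁻¹) (fun y => μ y⁻¹) x := by
  simp only [convolve]
  conv_rhs => rw [← (Equiv.mulLeft x).tsum_eq]
  refine tsum_congr fun y => ?_
  simp [mul_comm, mul_assoc]

theorem convPow_zero_apply [DecidableEq G] (μ : G → ℝ) (x : G) :
    convPow μ 0 x = if x = 1 then 1 else 0 := by
  simp [convPow]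

theorem convPow_zero_convolve (μ ν : G → ℝ) : convolve (convPow μ 0) ν = ν := by
  classical
  funext x
  rw [convolve, tsum_eq_single 1 fun y hy => by simp [convPow_zero_apply, hy]]
  simp [convPow_zero_apply]

theorem convolve_convPow_zero (μ ν : G → ℝ) : convolve ν (convPow μ 0) = ν := by
  classical
  funext x
  rw [convolve, tsum_eq_single x fun y hy => by
    simp [convPow_zero_apply, inv_mul_eq_one, hy]]
  simp [convPow_zero_apply]

end Convolution

section ConvPow

variable {G : Type*} [Group G] {μ : G → ℝ}

theorem convPow_one (μ : G → ℝ) : convPow μ 1 = μ :=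
  convolve_convPow_zero μ μ

theorem convPow_nonneg (hμ0 : 0 ≤ μ) : ∀ n, 0 ≤ convPow μ n
  | 0 => by
    classical
    intro x
    rw [Pi.zero_apply, convPow_zero_apply]
    split_ifs <;> norm_num
  | n + 1 => convolve_nonneg hμ0 (convPow_nonneg hμ0 n)

theorem summable_convPow (hμ0 : 0 ≤ μ) (hμ : Summable μ) : ∀ n, Summable (convPow μ n)
  | 0 => by
    classical
    exact summable_of_ne_finset_zero (s := {1}) fun x hx => by
      simp_all [convPow_zero_apply]
  | n + 1 => summable_convolve hμ0 hμ (convPow_nonneg hμ0 n) (summable_convPow hμ0 hμ n)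

theorem tsum_convPow (hμ0 : 0 ≤ μ) (hμ : Summable μ) :
    ∀ n, ∑' x, convPow μ n x = (∑' x, μ x) ^ n
  | 0 => by
    classical
    simp [convPow_zero_apply]
  | n + 1 => by
    rw [convPow, tsum_convolve hμ0 hμ (convPow_nonneg hμ0 n) (summable_convPow hμ0 hμ n),
      tsum_convPow hμ0 hμ n, pow_succ']

theorem convPow_add (hμ0 : 0 ≤ μ) (hμ : Summable μ) (m k : ℕ) :
    convPow μ (m + k) = convolve (convPow μ m) (convPow μ k) := by
  induction m with
  | zero => rw [zero_add, convPow_zero_convolve]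
  | succ m ih =>
    rw [Nat.succ_add, convPow, ih, convPow, convolve_assoc hμ0 hμ (convPow_nonneg hμ0 m)
      (summable_convPow hμ0 hμ m) (convPow_nonneg hμ0 k) (summable_convPow hμ0 hμ k)]

theorem convPow_succ' (hμ0 : 0 ≤ μ) (hμ : Summable μ) (n : ℕ) :
    convPow μ (n + 1) = convolve (convPow μ n) μ := by
  rw [convPow_add hμ0 hμ, convPow_one]

theorem convPow_apply_inv (hμ0 : 0 ≤ μ) (hμ : Summable μ) (hμinv : ∀ x, μ x⁻¹ = μ x) :
    ∀ n x, convPow μ n x⁻¹ = convPow μ n x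
  | 0, x => by
    classical
    simp [convPow_zero_apply]
  | n + 1, x => by
    have ih : (fun y => convPow μ n y⁻¹) = convPow μ n :=
      funext (convPow_apply_inv hμ0 hμ hμinv n)
    rw [convPow, convolve_apply_inv, ih, funext hμinv, ← convPow_succ' hμ0 hμ, convPow]

theorem convPow_add_apply_one (hμ0 : 0 ≤ μ) (hμ : Summable μ)
    (hμinv : ∀ x, μ x⁻¹ = μ x) (m k : ℕ) :
    convPow μ (m + k) 1 = ∑' x, convPow μ m x * convPow μ k x := by
  rw [convPow_add hμ0 hμ]
  exact tsum_congr fun y => by rw [mul_one, convPow_apply_inv hμ0 hμ hμinv]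

theorem convPow_two_mul_apply_one (hμ0 : 0 ≤ μ) (hμ : Summable μ)
    (hμinv : ∀ x, μ x⁻¹ = μ x) (m : ℕ) :
    convPow μ (2 * m) 1 = ∑' x, convPow μ m x ^ 2 := by
  simp only [two_mul, convPow_add_apply_one hμ0 hμ hμinv, sq]

end ConvPow

section SymProb

variable {G : Type*} [Group G] {μ : G → ℝ}

theorem IsSymProb.nonneg (hμ : IsSymProb μ) : 0 ≤ μ := hμ.1

theorem IsSymProb.tsum_eq_one (hμ : IsSymProb μ) : ∑' x, μ x = 1 := hμ.2.1

theorem IsSymProb.apply_inv (hμ : IsSymProb μ) (x : G) : μ x⁻¹ = μ x := hμ.2.2 x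

theorem IsSymProb.summable (hμ : IsSymProb μ) : Summable μ := by
  by_contra h
  simpa [tsum_eq_zero_of_not_summable h] using hμ.tsum_eq_one

theorem tsum_sq_convolve_le (hμ0 : 0 ≤ μ) (hμ : Summable μ) {f : G → ℝ} (hf0 : 0 ≤ f)
    (hf : Summable f) : ∑' x, convolve μ f x ^ 2 ≤ (∑' x, μ x) ^ 2 * ∑' x, f x ^ 2 := by
  have hf2 := summable_sq_of_nonneg hf0 hf
  have hf20 : 0 ≤ fun x => f x ^ 2 := fun x => sq_nonneg (f x)
  have hpt (x : G) : convolve μ f x ^ 2 ≤ (∑' y, μ y) * convolve μ (fun z => f z ^ 2) x :=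
    sq_tsum_mul_le_tsum_mul_tsum_mul_sq hμ0 hμ (summable_convolve_summand hμ0 hμ hf20 hf2 x)
  calc ∑' x, convolve μ f x ^ 2 ≤ ∑' x, (∑' y, μ y) * convolve μ (fun z => f z ^ 2) x :=
        (summable_sq_of_nonneg (convolve_nonneg hμ0 hf0)
          (summable_convolve hμ0 hμ hf0 hf)).tsum_le_tsum hpt
          ((summable_convolve hμ0 hμ hf20 hf2).mul_left _)
    _ = (∑' x, μ x) ^ 2 * ∑' x, f x ^ 2 := by
        rw [tsum_mul_left, tsum_convolve hμ0 hμ hf20 hf2]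
        ring

theorem convPow_two_mul_succ_le (hμ : IsSymProb μ) (m : ℕ) :
    convPow μ (2 * (m + 1)) 1 ≤ convPow μ (2 * m) 1 := by
  have hμ0 := hμ.nonneg
  have hμs := hμ.summable
  rw [convPow_two_mul_apply_one hμ0 hμs hμ.apply_inv,
    convPow_two_mul_apply_one hμ0 hμs hμ.apply_inv]
  simpa [convPow, hμ.tsum_eq_one] using
    tsum_sq_convolve_le hμ0 hμs (convPow_nonneg hμ0 m) (summable_convPow hμ0 hμs m)

theorem convPow_two_mul_antitone (hμ : IsSymProb μ) : Antitone fun m => convPow μ (2 * m) 1 :=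
  antitone_nat_of_succ_le (convPow_two_mul_succ_le hμ)

end SymProb

section LazyWalk

variable {G : Type*} [Group G] {φ : G → ℝ}

noncomputable def lazyWalk (φ : G → ℝ) : G → ℝ := fun x => (convPow φ 0 x + φ x) / 2

theorem lazyWalk_apply_of_ne_one {y : G} (hy : y ≠ 1) : lazyWalk φ y = φ y / 2 := by
  classical
  simp [lazyWalk, convPow_zero_apply, hy]

theorem lazyWalk_nonneg (hφ0 : 0 ≤ φ) : 0 ≤ lazyWalk φ := fun x =>
  div_nonneg (add_nonneg (convPow_nonneg hφ0 0 x) (hφ0 x)) zero_le_two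

theorem summable_lazyWalk (hφ0 : 0 ≤ φ) (hφ : Summable φ) : Summable (lazyWalk φ) :=
  ((summable_convPow hφ0 hφ 0).add hφ).div_const 2

theorem IsSymProb.lazyWalk (hφ : IsSymProb φ) : IsSymProb (lazyWalk φ) := by
  refine ⟨lazyWalk_nonneg hφ.nonneg, ?_, fun x => ?_⟩
  · show ∑' x, (convPow φ 0 x + φ x) / 2 = 1
    rw [tsum_div_const, (summable_convPow hφ.nonneg hφ.summable 0).tsum_add hφ.summable,
      tsum_convPow hφ.nonneg hφ.summable, hφ.tsum_eq_one]
    norm_num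
  · classical
    simp [_root_.lazyWalk, convPow_zero_apply, hφ.apply_inv]

theorem convolve_lazyWalk_apply (hφ0 : 0 ≤ φ) (hφ : Summable φ) {f : G → ℝ}
    (hf0 : 0 ≤ f) (hf : Summable f) (x : G) :
    convolve (lazyWalk φ) f x = (f x + convolve φ f x) / 2 := by
  calc convolve (lazyWalk φ) f x = (convolve (convPow φ 0) f x + convolve φ f x) / 2 := by
        simp only [convolve]
        rw [← Summable.tsum_add
          (summable_convolve_summand (convPow_nonneg hφ0 0) (summable_convPow hφ0 hφ 0) hf0 hf x)
          (summable_convolve_summand hφ0 hφ hf0 hf x), ← tsum_div_const]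
        exact tsum_congr fun y => by simp only [lazyWalk]; ring
    _ = (f x + convolve φ f x) / 2 := by rw [convPow_zero_convolve]

-- With `g = L^{(m)}`: `b (2m + 1) - b (2m + 2) = (‖g‖₂² - ‖φ * g‖₂²) / 4 ≥ 0`.
theorem convPow_lazyWalk_two_mul_add_two_le_add_one (hφ : IsSymProb φ) (m : ℕ) :
    convPow (lazyWalk φ) (2 * m + 2) 1 ≤ convPow (lazyWalk φ) (2 * m + 1) 1 := by
  have hL := hφ.lazyWalk
  set g := convPow (lazyWalk φ) m
  have hg0 : 0 ≤ g := convPow_nonneg hL.nonneg m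
  have hg : Summable g := summable_convPow hL.nonneg hL.summable m
  set Pg := convolve φ g
  have hg2 := summable_sq_of_nonneg hg0 hg
  have hPg2 := summable_sq_of_nonneg (convolve_nonneg hφ.nonneg hg0)
    (summable_convolve hφ.nonneg hφ.summable hg0 hg)
  have hgPg := summable_mul_of_summable_sq hg2 hPg2
  have hPg_le : ∑' x, Pg x ^ 2 ≤ ∑' x, g x ^ 2 := by
    simpa [hφ.tsum_eq_one] using tsum_sq_convolve_le hφ.nonneg hφ.summable hg0 hg
  have hstep (x : G) : convPow (lazyWalk φ) (m + 1) x = (g x + Pg x) / 2 :=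
    convolve_lazyWalk_apply hφ.nonneg hφ.summable hg0 hg x
  have hodd : convPow (lazyWalk φ) (2 * m + 1) 1
      = (∑' x, g x ^ 2) / 2 + (∑' x, g x * Pg x) / 2 := by
    rw [show 2 * m + 1 = m + (m + 1) by ring,
      convPow_add_apply_one hL.nonneg hL.summable hL.apply_inv m (m + 1), ← tsum_div_const,
      ← tsum_div_const, ← (hg2.div_const 2).tsum_add (hgPg.div_const 2)]
    exact tsum_congr fun x => by rw [hstep]; ring
  have heven : convPow (lazyWalk φ) (2 * m + 2) 1
      = (∑' x, g x ^ 2) / 4 + (∑' x, g x * Pg x) / 2 + (∑' x, Pg x ^ 2) / 4 := by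
    rw [show 2 * m + 2 = 2 * (m + 1) by ring, convPow_two_mul_apply_one hL.nonneg hL.summable
      hL.apply_inv, ← tsum_div_const, ← tsum_div_const, ← tsum_div_const,
      ← (hg2.div_const 4).tsum_add (hgPg.div_const 2),
      ← ((hg2.div_const 4).add (hgPg.div_const 2)).tsum_add (hPg2.div_const 4)]
    exact tsum_congr fun x => by rw [hstep]; ring
  rw [hodd, heven]
  linarith

theorem convPow_lazyWalk_apply (hφ0 : 0 ≤ φ) (hφ : Summable φ) (n : ℕ) (x : G) :
    convPow (lazyWalk φ) n x
      = (∑ k ∈ Finset.range (n + 1), (n.choose k : ℝ) * convPow φ k x) / 2 ^ n := by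
  induction n generalizing x with
  | zero => simp [convPow]
  | succ n ih =>
    have hL0 := lazyWalk_nonneg hφ0
    have hL := summable_lazyWalk hφ0 hφ
    have hconv : convolve φ (convPow (lazyWalk φ) n) x
        = (∑ k ∈ Finset.range (n + 1), (n.choose k : ℝ) * convPow φ (k + 1) x) / 2 ^ n := by
      simp only [convolve, ih, mul_div_assoc', Finset.mul_sum, tsum_div_const]
      rw [Summable.tsum_finsetSum fun k _ => ?_]
      · exact congrArg (· / _) <| Finset.sum_congr rfl fun k _ => by
          rw [convPow, convolve, ← tsum_mul_left]
          exact tsum_congr fun y => by ring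
      · exact (summable_convolve_summand hφ0 hφ (convPow_nonneg hφ0 k)
          (summable_convPow hφ0 hφ k) x).mul_left (n.choose k : ℝ) |>.congr fun y => by ring
    rw [convPow, convolve_lazyWalk_apply hφ0 hφ (convPow_nonneg hL0 n)
      (summable_convPow hL0 hL n), ih, hconv,
      Finset.sum_choose_succ_mul (fun i _ => convPow φ i x)]
    field_simp
    ring

theorem sum_range_choose_mul_one_add_neg_one_pow (n : ℕ) :
    ∑ k ∈ Finset.range (n + 1), (n.choose k : ℝ) * (1 + (-1) ^ k) = 2 ^ n + 0 ^ n := by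
  have h₁ := add_pow (1 : ℝ) 1 n
  have h₂ := add_pow (-1 : ℝ) 1 n
  simp only [one_pow, one_mul, mul_one] at h₁ h₂
  norm_num at h₁ h₂
  rw [h₁, h₂, ← Finset.sum_add_distrib]
  exact Finset.sum_congr rfl fun k _ => by ring

theorem convPow_two_mul_le_two_mul_convPow_lazyWalk (hφ : IsSymProb φ) (N : ℕ) :
    convPow φ (2 * N) 1 ≤ 2 * convPow (lazyWalk φ) (2 * N) 1 := by
  have ha0 (k : ℕ) : 0 ≤ convPow φ k 1 := convPow_nonneg hφ.nonneg k 1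
  have hparity (k : ℕ) (hk : k ≤ 2 * N) :
      (1 + (-1) ^ k) * convPow φ (2 * N) 1 ≤ 2 * convPow φ k 1 := by
    rcases Nat.even_or_odd' k with ⟨j, rfl | rfl⟩
    · rw [pow_mul]
      norm_num
      exact convPow_two_mul_antitone hφ (by omega)
    · rw [pow_succ, pow_mul]
      norm_num
      exact ha0 _
  have hweighted : ∀ k ∈ Finset.range (2 * N + 1),
      (((2 * N).choose k : ℝ) * (1 + (-1) ^ k)) * convPow φ (2 * N) 1
        ≤ 2 * (((2 * N).choose k : ℝ) * convPow φ k 1) := fun k hk => by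
    have := mul_le_mul_of_nonneg_left (hparity k (by simpa [Nat.lt_succ_iff] using hk))
      (Nat.cast_nonneg ((2 * N).choose k) : (0 : ℝ) ≤ _)
    linarith
  have hsum := Finset.sum_le_sum hweighted
  rw [← Finset.sum_mul, sum_range_choose_mul_one_add_neg_one_pow, ← Finset.mul_sum] at hsum
  rw [convPow_lazyWalk_apply hφ.nonneg hφ.summable, mul_div_assoc', le_div_iff₀ (by positivity)]
  nlinarith [ha0 (2 * N), pow_nonneg (le_refl (0 : ℝ)) (2 * N)]

end LazyWalk

section Dirichlet

variable {G : Type*} [Group G] {μ : G → ℝ} {f g : G → ℝ}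

theorem dirichletE_nonneg (hμ0 : 0 ≤ μ) (f : G → ℝ) : 0 ≤ dirichletE μ f :=
  mul_nonneg one_half_pos.le <|
    tsum_nonneg fun _ => tsum_nonneg fun y => mul_nonneg (sq_nonneg _) (hμ0 y)

theorem dirichletE_const_mul (μ f : G → ℝ) (a : ℝ) :
    dirichletE μ (fun x => a * f x) = a ^ 2 * dirichletE μ f := by
  simp only [dirichletE, ← mul_sub, mul_pow, mul_assoc, tsum_mul_left]
  ring

theorem dirichletE_lazyWalk (φ f : G → ℝ) :
    dirichletE (lazyWalk φ) f = dirichletE φ f / 2 := by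
  have hpt (x y : G) :
      (f (x * y) - f x) ^ 2 * lazyWalk φ y = (f (x * y) - f x) ^ 2 * φ y / 2 := by
    rcases eq_or_ne y 1 with rfl | hy
    · simp
    · rw [lazyWalk_apply_of_ne_one hy]
      ring
  simp only [dirichletE, hpt, tsum_div_const]
  ring

theorem summable_sq_comp_mul_mul (hμ0 : 0 ≤ μ) (hμ : Summable μ)
    (hf : Summable fun x => f x ^ 2) : Summable fun p : G × G => f (p.1 * p.2) ^ 2 * μ p.2 := by
  let e : G × G ≃ G × G :=
    Equiv.prodComm G G |>.trans (Equiv.prodShear (Equiv.refl G) Equiv.mulRight) |>.trans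
      (Equiv.prodComm G G)
  exact e.summable_iff.mpr (hf.mul_of_nonneg hμ (fun x => sq_nonneg (f x)) hμ0)

theorem summable_mul_comp_mul_mul (hμ0 : 0 ≤ μ) (hμ : Summable μ)
    (hf : Summable fun x => f x ^ 2) :
    Summable fun p : G × G => f p.1 * f (p.1 * p.2) * μ p.2 :=
  .of_norm_bounded (((summable_sq_comp_mul_mul hμ0 hμ hf).add
      (hf.mul_of_nonneg hμ (fun x => sq_nonneg (f x)) hμ0)).div_const 2) fun p => by
    rw [Real.norm_eq_abs, abs_mul, abs_mul, abs_of_nonneg (hμ0 p.2), ← sq_abs (f p.1),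
      ← sq_abs (f (p.1 * p.2))]
    nlinarith [mul_nonneg (hμ0 p.2) (sq_nonneg (|f p.1| - |f (p.1 * p.2)|))]

theorem summable_dirichletE_integrand (hμ0 : 0 ≤ μ) (hμ : Summable μ)
    (hf : Summable fun x => f x ^ 2) :
    Summable fun p : G × G => (f (p.1 * p.2) - f p.1) ^ 2 * μ p.2 :=
  (((summable_sq_comp_mul_mul hμ0 hμ hf).add
      (hf.mul_of_nonneg hμ (fun x => sq_nonneg (f x)) hμ0)).sub
    ((summable_mul_comp_mul_mul hμ0 hμ hf).mul_left 2)).congr fun p => by ring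

theorem dirichletE_eq_tsum_prod
    (hf : Summable fun p : G × G => (f (p.1 * p.2) - f p.1) ^ 2 * μ p.2) :
    dirichletE μ f = (∑' p : G × G, (f (p.1 * p.2) - f p.1) ^ 2 * μ p.2) / 2 := by
  rw [dirichletE, hf.tsum_prod]
  ring

theorem dirichletE_le_of_sq_sub_le (hμ0 : 0 ≤ μ)
    (hg : Summable fun p : G × G => (g (p.1 * p.2) - g p.1) ^ 2 * μ p.2)
    (hfg : ∀ a b, (f a - f b) ^ 2 ≤ (g a - g b) ^ 2) : dirichletE μ f ≤ dirichletE μ g := by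
  have hpt (p : G × G) :
      (f (p.1 * p.2) - f p.1) ^ 2 * μ p.2 ≤ (g (p.1 * p.2) - g p.1) ^ 2 * μ p.2 :=
    mul_le_mul_of_nonneg_right (hfg _ _) (hμ0 p.2)
  have hf := hg.of_nonneg_of_le (fun p => mul_nonneg (sq_nonneg _) (hμ0 p.2)) hpt
  rw [dirichletE_eq_tsum_prod hf, dirichletE_eq_tsum_prod hg]
  exact div_le_div_of_nonneg_right (hf.tsum_le_tsum hpt hg) zero_le_two

theorem dirichletE_eq_tsum_sq_sub (hμ : IsSymProb μ) (hf : Summable fun x => f x ^ 2) :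
    dirichletE μ f = ∑' x, f x ^ 2 - ∑' x, f x * convolve f μ x := by
  have hA := summable_sq_comp_mul_mul hμ.nonneg hμ.summable hf
  have hB := hf.mul_of_nonneg hμ.summable (fun x => sq_nonneg (f x)) hμ.nonneg
  have hC := summable_mul_comp_mul_mul hμ.nonneg hμ.summable hf
  have hAsum : ∑' p : G × G, f (p.1 * p.2) ^ 2 * μ p.2 = ∑' x, f x ^ 2 := by
    calc ∑' p : G × G, f (p.1 * p.2) ^ 2 * μ p.2 = ∑' x, ∑' y, f (x * y) ^ 2 * μ y :=
          hA.tsum_prod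
      _ = ∑' y, ∑' x, f (x * y) ^ 2 * μ y :=
          (Summable.tsum_comm (f := fun x y => f (x * y) ^ 2 * μ y) hA).symm
      _ = ∑' y, (∑' x, f x ^ 2) * μ y := tsum_congr fun y => by
          rw [tsum_mul_right]
          exact congrArg (· * μ y) ((Equiv.mulRight y).tsum_eq fun x => f x ^ 2)
      _ = ∑' x, f x ^ 2 := by rw [tsum_mul_left, hμ.tsum_eq_one, mul_one]
  have hBsum : ∑' p : G × G, f p.1 ^ 2 * μ p.2 = ∑' x, f x ^ 2 := by
    rw [← hf.tsum_mul_tsum hμ.summable hB, hμ.tsum_eq_one, mul_one]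
  have hCsum : ∑' p : G × G, f p.1 * f (p.1 * p.2) * μ p.2 = ∑' x, f x * convolve f μ x := by
    rw [hC.tsum_prod]
    refine tsum_congr fun x => ?_
    simp only [mul_assoc, tsum_mul_left, convolve]
    congr 1
    conv_rhs => rw [← (Equiv.mulLeft x).tsum_eq]
    exact tsum_congr fun y => by simp [hμ.apply_inv]
  rw [dirichletE_eq_tsum_prod (summable_dirichletE_integrand hμ.nonneg hμ.summable hf),
    show (fun p : G × G => (f (p.1 * p.2) - f p.1) ^ 2 * μ p.2) = fun p =>
      f (p.1 * p.2) ^ 2 * μ p.2 + f p.1 ^ 2 * μ p.2 - 2 * (f p.1 * f (p.1 * p.2) * μ p.2) from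
      funext fun p => by ring,
    (hA.add hB).tsum_sub (hC.mul_left 2), hA.tsum_add hB, tsum_mul_left, hAsum, hBsum, hCsum]
  ring

end Dirichlet

section Truncation

variable {α : Type*} {g : α → ℝ} {c : ℝ}

theorem finite_support_max_sub (hg : Summable g) (hc : 0 < c) :
    (Function.support fun x => max (g x - c) 0).Finite :=
  (Filter.eventually_cofinite.mp (hg.tendsto_cofinite_zero.eventually_lt_const hc)).subset
    fun x hx => by
      simp only [Function.mem_support, ne_eq, max_eq_right_iff, not_le, sub_pos] at hx
      exact hx.not_gt

theorem mul_ncard_support_max_sub_le (hg0 : 0 ≤ g) (hg : Summable g) (hc : 0 < c) :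
    c * (Function.support fun x => max (g x - c) 0).ncard ≤ ∑' x, g x := by
  classical
  set s := Function.support fun x => max (g x - c) 0
  have hs : s.Finite := finite_support_max_sub hg hc
  have hle : ∀ x ∈ hs.toFinset, c ≤ g x := fun x hx => by
    have : max (g x - c) 0 ≠ 0 := hs.mem_toFinset.mp hx
    contrapose! this
    exact max_eq_right (by linarith)
  calc c * s.ncard = ∑ _x ∈ hs.toFinset, c := by
        rw [Finset.sum_const, nsmul_eq_mul, Set.ncard_eq_toFinset_card s hs, mul_comm]
    _ ≤ ∑ x ∈ hs.toFinset, g x := Finset.sum_le_sum hle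
    _ ≤ ∑' x, g x := hg.sum_le_tsum _ fun x _ => hg0 x

theorem tsum_sq_sub_le_tsum_sq_max_sub (hg0 : 0 ≤ g) (hg : Summable g) (hc : 0 < c) :
    ∑' x, g x ^ 2 - 2 * c * ∑' x, g x ≤ ∑' x, max (g x - c) 0 ^ 2 := by
  have hpt (x : α) : g x ^ 2 - 2 * c * g x ≤ max (g x - c) 0 ^ 2 := by
    rcases le_total (g x) c with h | h
    · rw [max_eq_right (by linarith)]
      nlinarith [mul_nonneg (hg0 x) (by linarith : 0 ≤ 2 * c - g x)]
    · rw [max_eq_left (by linarith)]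
      nlinarith
  rw [← tsum_mul_left, ← (summable_sq_of_nonneg hg0 hg).tsum_sub (hg.mul_left _)]
  exact ((summable_sq_of_nonneg hg0 hg).sub (hg.mul_left _)).tsum_le_tsum hpt
    (summable_of_hasFiniteSupport (finite_support_max_sub hg hc |>.subset fun x hx => by
      simp_all [Function.mem_support]))

end Truncation

section SpectralProfile

variable {G : Type*} [Group G] {φ : G → ℝ} {V ε : ℝ}

theorem mul_tsum_sq_le_dirichletE_of_lt_specProfile (hφ0 : 0 ≤ φ) (hΛ : ε < specProfile φ V)
    {f : G → ℝ} (hf : (Function.support f).Finite)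
    (hfV : ((Function.support f).ncard : ℝ) ≤ V) :
    ε * ∑' x, f x ^ 2 ≤ dirichletE φ f := by
  set s := ∑' x, f x ^ 2
  have hs0 : 0 ≤ s := tsum_nonneg fun x => sq_nonneg (f x)
  rcases hs0.eq_or_lt with hs | hs
  · rw [← hs, mul_zero]
    exact dirichletE_nonneg hφ0 f
  set a := (√s)⁻¹
  have ha : a ≠ 0 := inv_ne_zero (Real.sqrt_pos.mpr hs).ne'
  have ha2 : a ^ 2 = s⁻¹ := by rw [inv_pow, Real.sq_sqrt hs.le]
  have hsupp : (Function.support fun x => a * f x) = Function.support f := by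
    ext x
    simp [ha]
  have hnorm : ∑' x, (a * f x) ^ 2 = 1 := by
    simp only [mul_pow, tsum_mul_left, ha2]
    exact inv_mul_cancel₀ hs.ne'
  have hle : specProfile φ V ≤ dirichletE φ (fun x => a * f x) :=
    csInf_le ⟨0, fun _ ⟨g, _, _, _, hE⟩ => hE ▸ dirichletE_nonneg hφ0 g⟩
      ⟨_, hsupp ▸ hf, hsupp ▸ hfV, hnorm, rfl⟩
  have hlt : ε < s⁻¹ * dirichletE φ f := by
    rw [← ha2, ← dirichletE_const_mul]
    exact hΛ.trans_le hle
  rw [inv_mul_eq_div, lt_div_iff₀ hs] at hlt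
  linarith

end SpectralProfile

theorem le_max_pow_of_le_mul {b : ℕ → ℝ} {a r : ℝ} (hr : 0 ≤ r) (h0 : b 0 ≤ 1)
    (hanti : ∀ m, b (m + 1) ≤ b m) (hstep : ∀ m, a ≤ b m → b (m + 1) ≤ r * b m) :
    ∀ m, b m ≤ max a (r ^ m)
  | 0 => by simpa using Or.inr h0
  | m + 1 => by
    rcases lt_or_ge (b m) a with hlt | hle
    · exact le_max_of_le_left ((hanti m).trans hlt.le)
    · rcases le_max_iff.mp (le_max_pow_of_le_mul hr h0 hanti hstep m) with h | h
      · exact le_max_of_le_left ((hanti m).trans h)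
      · exact le_max_of_le_right (by
          rw [pow_succ']
          exact (hstep m hle).trans (mul_le_mul_of_nonneg_left h hr))

section Nash

variable {G : Type*} [Group G] {φ : G → ℝ} {V ε : ℝ}

theorem convPow_lazyWalk_two_mul_add_two_le_of_lt_specProfile (hφ : IsSymProb φ) (hV : 0 < V)
    (hε : 0 ≤ ε) (hΛ : ε < specProfile φ V) {m : ℕ}
    (hb : 4 / V ≤ convPow (lazyWalk φ) (2 * m) 1) :
    convPow (lazyWalk φ) (2 * m + 2) 1 ≤ (1 - ε / 4) * convPow (lazyWalk φ) (2 * m) 1 := by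
  have hL := hφ.lazyWalk
  set g := convPow (lazyWalk φ) m
  set b := convPow (lazyWalk φ) (2 * m) 1
  have hg0 : 0 ≤ g := convPow_nonneg hL.nonneg m
  have hg : Summable g := summable_convPow hL.nonneg hL.summable m
  have hg1 : ∑' x, g x = 1 := by
    rw [tsum_convPow hL.nonneg hL.summable, hL.tsum_eq_one, one_pow]
  have hb2 : b = ∑' x, g x ^ 2 := convPow_two_mul_apply_one hL.nonneg hL.summable hL.apply_inv m
  have hbpos : 0 < b := (div_pos four_pos hV).trans_le hb
  set h := fun x => max (g x - b / 4) 0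
  have hc : 0 < b / 4 := by positivity
  have hh : (Function.support h).Finite := finite_support_max_sub hg hc
  have hhV : ((Function.support h).ncard : ℝ) ≤ V := by
    have := mul_ncard_support_max_sub_le hg0 hg hc
    rw [hg1] at this
    rw [div_le_iff₀ hV] at hb
    nlinarith
  have hh2 : b / 2 ≤ ∑' x, h x ^ 2 := by
    have := tsum_sq_sub_le_tsum_sq_max_sub hg0 hg hc
    rw [hg1, ← hb2] at this
    linarith
  have hEg : dirichletE (lazyWalk φ) g = b - convPow (lazyWalk φ) (2 * m + 1) 1 := by
    rw [dirichletE_eq_tsum_sq_sub hL (summable_sq_of_nonneg hg0 hg), ← hb2,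
      ← convPow_succ' hL.nonneg hL.summable, show 2 * m + 1 = m + (m + 1) by ring,
      convPow_add_apply_one hL.nonneg hL.summable hL.apply_inv]
  have hEh : dirichletE (lazyWalk φ) h ≤ dirichletE (lazyWalk φ) g :=
    dirichletE_le_of_sq_sub_le hL.nonneg
      (summable_dirichletE_integrand hL.nonneg hL.summable (summable_sq_of_nonneg hg0 hg))
      fun x y => sq_le_sq.mpr <| (abs_max_sub_max_le_abs _ _ _).trans_eq <| by
        rw [sub_sub_sub_cancel_right]
  have hR := mul_tsum_sq_le_dirichletE_of_lt_specProfile hφ.nonneg hΛ hh hhV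
  rw [dirichletE_lazyWalk] at hEh
  have := convPow_lazyWalk_two_mul_add_two_le_add_one hφ m
  nlinarith

theorem convPow_lazyWalk_two_mul_le_of_lt_specProfile (hφ : IsSymProb φ) (hV : 0 < V)
    (hε : 0 ≤ ε) (hΛ : ε < specProfile φ V) (m : ℕ) :
    convPow (lazyWalk φ) (2 * m) 1 ≤ max (4 / V) (Real.exp (-(ε / 4)) ^ m) := by
  have hL := hφ.lazyWalk
  refine le_max_pow_of_le_mul (b := fun k => convPow (lazyWalk φ) (2 * k) 1)
    (Real.exp_pos _).le (by simp [convPow])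
    (convPow_two_mul_succ_le hL) (fun k hk => ?_) m
  rw [mul_add, mul_one]
  refine (convPow_lazyWalk_two_mul_add_two_le_of_lt_specProfile hφ hV hε hΛ hk).trans ?_
  exact mul_le_mul_of_nonneg_right (by linarith [Real.add_one_le_exp (-(ε / 4))])
    (convPow_nonneg hL.nonneg _ 1)

end Nash

section ReturnBound

variable {G : Type*} [Group G] {φ : G → ℝ} {π : ℝ → ℝ}

theorem exp_neg_two_mul_le_two_mul_convPow_lazyWalk (hφ : IsSymProb φ)
    (hπmono : MonotoneOn π (Set.Ioi 0))
    (hret : ∀ n : ℕ, 1 ≤ n → Real.exp (-((n : ℝ) / π n)) ≤ convPow φ n 1)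
    {N : ℕ} (hN : 1 ≤ N) (hπN : 0 < π N) :
    Real.exp (-(2 * (N / π N))) ≤ 2 * convPow (lazyWalk φ) (2 * N) 1 := by
  have hN0 : (0 : ℝ) < N := by exact_mod_cast hN
  have hmono : π N ≤ π (2 * N) := hπmono hN0 (by simpa using hN0) (by linarith)
  refine le_trans ?_ (convPow_two_mul_le_two_mul_convPow_lazyWalk hφ N)
  refine (Real.exp_le_exp.mpr ?_).trans (hret (2 * N) (by omega))
  push_cast
  rw [neg_le_neg_iff, mul_div_assoc']
  gcongr

end ReturnBound

theorem max_four_div_exp_exp_pow_le {A s : ℝ} (hA : 0 ≤ A) (hs : 0 < s) (N : ℕ) :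
    max (4 / Real.exp (A * N / s)) (Real.exp (-(A / (2 * s) / 4)) ^ N)
      ≤ 4 * Real.exp (-(A * (N / s) / 8)) := by
  rw [← Real.exp_nat_mul, div_eq_mul_inv, ← Real.exp_neg, mul_div_assoc]
  have hAN : 0 ≤ A * (N / s) := by positivity
  refine max_le (mul_le_mul_of_nonneg_left (Real.exp_le_exp.mpr (by linarith)) zero_le_four) ?_
  rw [show (N : ℝ) * -(A / (2 * s) / 4) = -(A * (N / s) / 8) by field_simp; ring]
  linarith [Real.exp_pos (-(A * (N / s) / 8))]

theorem eight_mul_exp_neg_lt_exp_neg {c t : ℝ} (ht : 1 ≤ c * t) :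
    8 * Real.exp (-((64 * c + 16) * t / 8)) < Real.exp (-(2 * t)) := by
  rw [show -(2 * t) = 8 * (c * t) + -((64 * c + 16) * t / 8) by ring, Real.exp_add]
  nlinarith [Real.add_one_le_exp (8 * (c * t)), Real.exp_pos (-((64 * c + 16) * t / 8))]

theorem specProfile_upper_from_return_general {G : Type*} [Group G]
    (φ : G → ℝ) (hφ : IsSymProb φ)
    (π : ℝ → ℝ) (hπpos : ∀ t > (0:ℝ), 0 < π t) (hπmono : MonotoneOn π (Set.Ioi 0))
    (c : ℝ) (hc : 0 < c) (hπlin : ∀ t > (0:ℝ), π t ≤ c * t)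
    (hret : ∀ n : ℕ, 1 ≤ n → Real.exp (-((n : ℝ) / π n)) ≤ convPow φ n 1) :
    ∃ A > (0:ℝ), ∀ n : ℕ, 1 ≤ n →
      specProfile φ (Real.exp (A * n / π n)) ≤ A / (2 * π n) := by
  refine ⟨64 * c + 16, by positivity, fun N hN => ?_⟩
  have hN0 : (0 : ℝ) < N := by exact_mod_cast hN
  have hπN := hπpos N hN0
  have ht : 1 ≤ c * (N / π N) := by
    rw [mul_div_assoc', le_div_iff₀ hπN]
    linarith [hπlin N hN0]
  have hlower := exp_neg_two_mul_le_two_mul_convPow_lazyWalk hφ hπmono hret hN hπN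
  by_contra! hΛ
  have hupper := convPow_lazyWalk_two_mul_le_of_lt_specProfile hφ (Real.exp_pos _)
    (by positivity) hΛ N
  linarith [max_four_div_exp_exp_pow_le (by positivity : 0 ≤ 64 * c + 16) hπN N,
    eight_mul_exp_neg_lt_exp_neg ht]

/-- If `φ^{(n)}(e) ≥ exp(−n/π(n))` for an increasing `π : (0,∞) → (0,∞)` with
`π(t) ≤ c·t`, then there is `A > 0` with `Λ_φ(exp(A·n/π(n))) ≤ A/(2π(n))` for all `n`. -/
theorem specProfile_upper_from_return {G : Type*} [Group G] [Countable G]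
    (φ : G → ℝ) (hφ : IsSymProb φ)
    (π : ℝ → ℝ) (hπpos : ∀ t > (0:ℝ), 0 < π t) (hπmono : MonotoneOn π (Set.Ioi 0))
    (c : ℝ) (hc : 0 < c) (hπlin : ∀ t > (0:ℝ), π t ≤ c * t)
    (hret : ∀ n : ℕ, 1 ≤ n → Real.exp (-((n : ℝ) / π n)) ≤ convPow φ n 1) :
    ∃ A > (0:ℝ), ∀ n : ℕ, 1 ≤ n →
      specProfile φ (Real.exp (A * n / π n)) ≤ A / (2 * π n) :=
  specProfile_upper_from_return_general φ hφ π hπpos hπmono c hc hπlin hret
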